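/- A subset transfer with respect to an item a at position k and a set S of items preceding a uses exactly Σ_{s ∈ S} (k − pos(s) − |{s' ∈ S : s' is between s and a}|) adjacent transpositions; equivalently, its cost equals the number of pairs (s, b) with s ∈ S, b ∉ S ∪ {a} is strictly between s and a in the list, plus |S| (the swaps of each s past a). Concretely, the cost of the subset transfer equals the number of inversions created between the original list and the resulting list. -/

import Mathlib

open Finset

variable {α : Type*} [DecidableEq α] [Inhabited α]

/-- Swap the items at adjacent positions `i` and `i+1` (0-indexed). -/
def swapAdj (i : ℕ) (L : List α) : List α :=
  if i + 1 < L.length then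
    (L.set i (L.getD (i+1) default)).set (i+1) (L.getD i default)
  else L

/-- Apply a sequence of adjacent transpositions (given by their positions). -/
def applySwaps (ops : List ℕ) (L : List α) : List α :=
  ops.foldl (fun M i => swapAdj i M) L

/-- Element transfer: move the item at position `k` to position `j` (0-indexed),
leaving the relative order of all other items unchanged. -/
def elemTransfer (k j : ℕ) (L : List α) : List α :=
  (L.eraseIdx k).insertIdx j (L.getD k default)

/-- Subset transfer: move the items of `S` (a subset of the items preceding `a`)
to immediately after `a`, preserving relative orders. -/
def subsetTransfer (a : α) (S : Finset α) (L : List α) : List α :=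
  ((L.take (L.idxOf a)).filter (fun x => x ∉ S)) ++ [a]
    ++ ((L.take (L.idxOf a)).filter (fun x => x ∈ S)) ++ L.drop (L.idxOf a + 1)

/-- Number of inversions between two orderings of the same items: the number of
(unordered) pairs whose relative order differs. -/
def invCount (L M : List α) : ℕ :=
  ((L.toFinset ×ˢ L.toFinset).filter
    (fun p => L.idxOf p.1 < L.idxOf p.2 ∧ M.idxOf p.2 < M.idxOf p.1)).card

/-!
One adjacent transposition changes the relative order of exactly one pair of items, so turning a
duplicate-free list `L` into a rearrangement `M` takes at least as many transpositions as there
are pairs on which `L` and `M` disagree. Conversely, while `L ≠ M` some adjacent pair of `L` is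
ordered the other way in `M`, and swapping it removes exactly that disagreement; so the bound is
attained.

The subset transfer lists the items of `L` sorted by block and then by position in `L`, the blocks
being: the items before `a` outside `S`, then `a`, then `S`, then the items after `a`. Hence a pair
`x` before `y` is inverted exactly when `x ∈ S` and `y ∉ S` lies no later than `a`. For fixed
`s ∈ S`, the positions in `(pos s, pos a]` hold `pos a - pos s` items, and removing those in `S`
gives the summand; separating `y = a` from the other `y` gives the second formula.
-/

section ListIndex

omit [Inhabited α]

theorem List.getElem_of_idxOf_eq {L : List α} {x : α} {i : ℕ} (h : L.idxOf x = i)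
    (hi : i < L.length) : L[i] = x := by
  subst h
  exact List.getElem_idxOf hi

theorem List.idxOf_lt_of_mem_take {L : List α} {k : ℕ} {x : α} (hx : x ∈ L.take k) :
    L.idxOf x < k :=
  (List.mem_take_iff_idxOf_lt (List.mem_of_mem_take hx)).1 hx

theorem List.Nodup.le_idxOf_of_mem_drop {L : List α} (hnd : L.Nodup) {k : ℕ} {x : α}
    (hx : x ∈ L.drop k) : k ≤ L.idxOf x := by
  have hx' : x ∉ L.take k :=
    List.disjoint_of_nodup_append ((List.take_append_drop k L).symm ▸ hnd) |>.symm hx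
  rw [List.mem_take_iff_idxOf_lt (List.mem_of_mem_drop hx)] at hx'
  omega

theorem List.Nodup.pairwise_idxOf_lt {L : List α} (hnd : L.Nodup) :
    L.Pairwise (fun x y => L.idxOf x < L.idxOf y) := by
  refine List.pairwise_iff_getElem.2 fun i j hi hj hij => ?_
  rwa [hnd.idxOf_getElem, hnd.idxOf_getElem]

theorem List.idxOf_lt_idxOf_iff_of_pairwise {β : Type*} [Preorder β] {M : List α} {f : α → β}
    (hM : M.Pairwise (fun x y => f x < f y)) {x y : α} (hx : x ∈ M) (hy : y ∈ M) :
    M.idxOf x < M.idxOf y ↔ f x < f y := by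
  have hx' := List.idxOf_lt_length_iff.2 hx
  have hy' := List.idxOf_lt_length_iff.2 hy
  have hxy := List.pairwise_iff_getElem.1 hM _ _ hx' hy'
  have hyx := List.pairwise_iff_getElem.1 hM _ _ hy' hx'
  rw [List.getElem_idxOf, List.getElem_idxOf] at hxy hyx
  refine ⟨hxy, fun hf => ?_⟩
  rcases lt_trichotomy (M.idxOf x) (M.idxOf y) with h | h | h
  · exact h
  · exact absurd hf (by rw [(List.idxOf_inj hx).1 h]; exact lt_irrefl _)
  · exact absurd (hyx h) (lt_asymm hf)

theorem exists_adjacent_inversion_of_ne {L M : List α} (hnd : L.Nodup) (hp : L.Perm M)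
    (hne : L ≠ M) : ∃ t, ∃ h : t + 1 < L.length, M.idxOf L[t + 1] < M.idxOf L[t] := by
  by_contra! hsorted
  have hchain : L.IsChain (fun x y => M.idxOf x < M.idxOf y) := by
    refine List.isChain_iff_getElem.2 fun i hi => (hsorted i hi).lt_of_ne fun heq => ?_
    have := (List.idxOf_inj (hp.subset (List.getElem_mem _))).1 heq
    rw [hnd.getElem_inj_iff] at this
    omega
  have : Trans (fun x y => M.idxOf x < M.idxOf y) (fun x y => M.idxOf x < M.idxOf y)
      (fun x y => M.idxOf x < M.idxOf y) := ⟨lt_trans⟩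
  exact hne (hp.eq_of_pairwise (fun _ _ _ _ hxy hyx => absurd (hxy.trans hyx) (lt_irrefl _))
    (List.isChain_iff_pairwise.1 hchain) (hp.nodup_iff.1 hnd).pairwise_idxOf_lt)

theorem card_filter_idxOf {L : List α} (hnd : L.Nodup) (p : ℕ → Prop) [DecidablePred p] :
    (L.toFinset.filter (fun x => p (L.idxOf x))).card = ((range L.length).filter p).card := by
  have himage : L.toFinset.image L.idxOf = range L.length := by
    ext n
    simp only [mem_image, List.mem_toFinset, mem_range]
    constructor
    · rintro ⟨x, hx, rfl⟩
      exact List.idxOf_lt_length_iff.2 hx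
    · exact fun hn => ⟨L[n], List.getElem_mem _, hnd.idxOf_getElem _ _⟩
  rw [← himage, filter_image, card_image_of_injOn]
  intro x hx y _ hxy
  exact (List.idxOf_inj (List.mem_toFinset.1 (mem_filter.1 hx).1)).1 hxy

theorem card_filter_idxOf_mem_Ioc {L : List α} (hnd : L.Nodup) {i j : ℕ} (hj : j < L.length) :
    (L.toFinset.filter (fun x => i < L.idxOf x ∧ L.idxOf x ≤ j)).card = j - i := by
  rw [card_filter_idxOf hnd (fun n => i < n ∧ n ≤ j), ← Nat.card_Ioc]
  congr 1
  ext n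
  simp only [mem_filter, mem_range, mem_Ioc]
  omega

end ListIndex

theorem Finset.card_filter_product {β γ : Type*} (s : Finset β) (t : Finset γ)
    (p : β × γ → Prop) [DecidablePred p] :
    ((s ×ˢ t).filter p).card = ∑ x ∈ s, (t.filter fun y => p (x, y)).card := by
  simp only [card_filter, sum_product]

theorem Nat.swap_lt_swap_iff {t i j : ℕ} (hij : ¬(i = t ∧ j = t + 1))
    (hji : ¬(i = t + 1 ∧ j = t)) :
    Equiv.swap t (t + 1) i < Equiv.swap t (t + 1) j ↔ i < j := by
  simp only [Equiv.swap_apply_def]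
  split_ifs <;> omega

section Inversions

omit [Inhabited α]

def inversions (L M : List α) : Finset (α × α) :=
  (L.toFinset ×ˢ L.toFinset).filter
    (fun p => L.idxOf p.1 < L.idxOf p.2 ∧ M.idxOf p.2 < M.idxOf p.1)

theorem invCount_eq_card_inversions (L M : List α) : invCount L M = (inversions L M).card := rfl

theorem mem_inversions {L M : List α} {x y : α} :
    (x, y) ∈ inversions L M ↔
      x ∈ L ∧ y ∈ L ∧ L.idxOf x < L.idxOf y ∧ M.idxOf y < M.idxOf x := by
  simp [inversions, and_assoc]

theorem invCount_self (L : List α) : invCount L L = 0 := by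
  simp only [invCount_eq_card_inversions, card_eq_zero, eq_empty_iff_forall_notMem]
  rintro ⟨x, y⟩ h
  have := mem_inversions.1 h
  omega

end Inversions

section AdjacentSwap

variable {L M : List α} {t : ℕ}

omit [DecidableEq α] in
theorem getElem?_swapAdj (h : t + 1 < L.length) (i : ℕ) :
    (swapAdj t L)[i]? = L[Equiv.swap t (t + 1) i]? := by
  have ht : t < L.length := by omega
  rw [swapAdj, if_pos h]
  rcases eq_or_ne i t with rfl | hit
  · simp [List.getElem?_eq_getElem h, ht]
  rcases eq_or_ne i (t + 1) with rfl | hit'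
  · simp [List.getElem?_eq_getElem ht, h]
  · simp [Equiv.swap_apply_of_ne_of_ne hit hit', hit.symm, hit'.symm]

omit [DecidableEq α] in
theorem swapAdj_perm (t : ℕ) (L : List α) : (swapAdj t L).Perm L := by
  unfold swapAdj
  split_ifs with h
  · rw [List.getD_eq_getElem _ _ h, List.getD_eq_getElem _ _ (by omega)]
    exact List.set_set_perm _ _
  · rfl

theorem idxOf_swapAdj (hnd : L.Nodup) (h : t + 1 < L.length) (x : α) :
    (swapAdj t L).idxOf x = Equiv.swap t (t + 1) (L.idxOf x) := by
  have hp := swapAdj_perm t L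
  by_cases hx : x ∈ L
  · have hget : (swapAdj t L)[Equiv.swap t (t + 1) (L.idxOf x)]? = some x := by
      rw [getElem?_swapAdj h, Equiv.swap_apply_self, List.getElem?_idxOf hx]
    obtain ⟨hlt, hget⟩ := List.getElem?_eq_some_iff.1 hget
    conv_lhs => rw [← hget]
    exact (hp.nodup_iff.2 hnd).idxOf_getElem _ _
  · rw [List.idxOf_of_notMem hx, List.idxOf_of_notMem (fun h' => hx (hp.subset h')),
      hp.length_eq, Equiv.swap_apply_of_ne_of_ne (by omega) (by omega)]

theorem inversions_subset_insert_swapAdj (hnd : L.Nodup) (h : t + 1 < L.length) :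
    inversions L M ⊆ insert (L[t], L[t + 1]) (inversions (swapAdj t L) M) := by
  rintro ⟨x, y⟩ hxy
  obtain ⟨hx, hy, hlt, hM⟩ := mem_inversions.1 hxy
  by_cases hpair : L.idxOf x = t ∧ L.idxOf y = t + 1
  · simp [List.getElem_of_idxOf_eq hpair.1, List.getElem_of_idxOf_eq hpair.2]
  · have hp := swapAdj_perm t L
    refine mem_insert_of_mem (mem_inversions.2 ⟨hp.mem_iff.2 hx, hp.mem_iff.2 hy, ?_, hM⟩)
    rwa [idxOf_swapAdj hnd h, idxOf_swapAdj hnd h, Nat.swap_lt_swap_iff hpair (by omega)]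

theorem inversions_swapAdj_ssubset (hnd : L.Nodup) (h : t + 1 < L.length)
    (hinv : M.idxOf L[t + 1] < M.idxOf L[t]) :
    inversions (swapAdj t L) M ⊂ inversions L M := by
  have hp := swapAdj_perm t L
  have hidx : L.idxOf L[t] = t := hnd.idxOf_getElem _ _
  have hidx' : L.idxOf L[t + 1] = t + 1 := hnd.idxOf_getElem _ _
  refine (ssubset_iff_of_subset fun ⟨x, y⟩ hxy => ?_).2 ⟨(L[t], L[t + 1]), ?_, ?_⟩
  · obtain ⟨hx, hy, hlt, hM⟩ := mem_inversions.1 hxy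
    have hyx : ¬(L.idxOf x = t + 1 ∧ L.idxOf y = t) := by
      rintro ⟨hxt, hyt⟩
      rw [List.getElem_of_idxOf_eq hxt, List.getElem_of_idxOf_eq hyt] at hinv
      omega
    rw [idxOf_swapAdj hnd h, idxOf_swapAdj hnd h] at hlt
    have hxy' : ¬(L.idxOf x = t ∧ L.idxOf y = t + 1) := by
      rintro ⟨hxt, hyt⟩
      simp [hxt, hyt] at hlt
    exact mem_inversions.2 ⟨hp.mem_iff.1 hx, hp.mem_iff.1 hy,
      (Nat.swap_lt_swap_iff hxy' hyx).1 hlt, hM⟩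
  · exact mem_inversions.2 ⟨List.getElem_mem _, List.getElem_mem _, by omega, hinv⟩
  · intro hmem
    have := (mem_inversions.1 hmem).2.2.1
    rw [idxOf_swapAdj hnd h, idxOf_swapAdj hnd h, hidx, hidx'] at this
    simp at this

theorem invCount_le_invCount_swapAdj_add_one (hnd : L.Nodup) (t : ℕ) :
    invCount L M ≤ invCount (swapAdj t L) M + 1 := by
  by_cases h : t + 1 < L.length
  · exact (card_le_card (inversions_subset_insert_swapAdj hnd h)).trans (card_insert_le _ _)
  · simp [swapAdj, h]

theorem invCount_swapAdj_lt (hnd : L.Nodup) (h : t + 1 < L.length)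
    (hinv : M.idxOf L[t + 1] < M.idxOf L[t]) : invCount (swapAdj t L) M < invCount L M :=
  card_lt_card (inversions_swapAdj_ssubset hnd h hinv)

theorem invCount_le_length_of_applySwaps {ops : List ℕ} (hnd : L.Nodup)
    (happ : applySwaps ops L = M) : invCount L M ≤ ops.length := by
  induction ops generalizing L with
  | nil =>
    subst happ
    simp [applySwaps, invCount_self]
  | cons t ops ih =>
    have hrest := ih ((swapAdj_perm t L).nodup_iff.2 hnd) happ
    have hstep := invCount_le_invCount_swapAdj_add_one (M := M) hnd t
    simp only [List.length_cons]
    omega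

theorem exists_applySwaps_length_le (hnd : L.Nodup) (hp : L.Perm M) :
    ∃ ops : List ℕ, ops.length ≤ invCount L M ∧ applySwaps ops L = M := by
  induction hn : invCount L M using Nat.strong_induction_on generalizing L with
  | _ n ih =>
    by_cases hLM : L = M
    · exact ⟨[], Nat.zero_le _, hLM⟩
    obtain ⟨t, h, hinv⟩ := exists_adjacent_inversion_of_ne hnd hp hLM
    have hlt := invCount_swapAdj_lt hnd h hinv
    have hp' := swapAdj_perm t L
    obtain ⟨ops, hlen, happ⟩ := ih _ (hn ▸ hlt) (hp'.nodup_iff.2 hnd) (hp'.trans hp) rfl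
    refine ⟨t :: ops, ?_, happ⟩
    rw [List.length_cons]
    omega

theorem isLeast_invCount (hnd : L.Nodup) (hp : L.Perm M) :
    IsLeast {n | ∃ ops : List ℕ, ops.length = n ∧ applySwaps ops L = M} (invCount L M) := by
  obtain ⟨ops, hlen, happ⟩ := exists_applySwaps_length_le hnd hp
  refine ⟨⟨ops, le_antisymm hlen (invCount_le_length_of_applySwaps hnd happ), happ⟩, ?_⟩
  rintro n ⟨ops, rfl, happ⟩
  exact invCount_le_length_of_applySwaps hnd happ

end AdjacentSwap

section SubsetTransfer

omit [Inhabited α]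

variable {L : List α} {a : α} {S : Finset α}

theorem subsetTransfer_perm (ha : a ∈ L) : (subsetTransfer a S L).Perm L := by
  have hdrop : L.drop (L.idxOf a) = a :: L.drop (L.idxOf a + 1) := by
    rw [List.drop_eq_getElem_cons (List.idxOf_lt_length_iff.2 ha), List.getElem_idxOf]
  have hsplit := List.filter_append_perm (fun x => decide (x ∉ S)) (L.take (L.idxOf a))
  simp only [decide_not, Bool.not_not] at hsplit
  conv_rhs => rw [← List.take_append_drop (L.idxOf a) L, hdrop]
  simp only [subsetTransfer, List.append_assoc, List.singleton_append, decide_not]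
  refine List.perm_middle.trans (List.Perm.trans ?_ List.perm_middle.symm)
  simpa only [List.append_assoc, List.append_eq] using (hsplit.append_right _).cons a

/-- The blocks of `subsetTransfer a S L`, in order. -/
def transferBlock (a : α) (S : Finset α) (L : List α) (x : α) : ℕ :=
  if L.idxOf x < L.idxOf a then (if x ∈ S then 2 else 0)
  else if L.idxOf x = L.idxOf a then 1 else 3

def transferKey (a : α) (S : Finset α) (L : List α) (x : α) : ℕ ×ₗ ℕ :=
  toLex (transferBlock a S L x, L.idxOf x)

theorem pairwise_transferKey_subsetTransfer (hnd : L.Nodup) :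
    (subsetTransfer a S L).Pairwise (fun x y => transferKey a S L x < transferKey a S L y) := by
  set k := L.idxOf a
  have hA : ∀ x ∈ (L.take k).filter (· ∉ S), transferBlock a S L x = 0 := fun x hx => by
    rw [List.mem_filter, decide_eq_true_iff] at hx
    rw [transferBlock, if_pos (List.idxOf_lt_of_mem_take hx.1), if_neg hx.2]
  have ha : transferBlock a S L a = 1 := by simp [transferBlock]
  have hB : ∀ x ∈ (L.take k).filter (· ∈ S), transferBlock a S L x = 2 := fun x hx => by
    rw [List.mem_filter, decide_eq_true_iff] at hx
    rw [transferBlock, if_pos (List.idxOf_lt_of_mem_take hx.1), if_pos hx.2]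
  have hC : ∀ x ∈ L.drop (k + 1), transferBlock a S L x = 3 := fun x hx => by
    have := hnd.le_idxOf_of_mem_drop hx
    rw [transferBlock, if_neg (by omega), if_neg (by omega)]
  have hwithin : ∀ {l : List α} (c : ℕ), l.Sublist L → (∀ x ∈ l, transferBlock a S L x = c) →
      l.Pairwise (fun x y => transferKey a S L x < transferKey a S L y) := fun c hl hc =>
    (hnd.pairwise_idxOf_lt.sublist hl).imp_of_mem fun hx hy hxy =>
      Prod.Lex.toLex_lt_toLex.2 (Or.inr ⟨(hc _ hx).trans (hc _ hy).symm, hxy⟩)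
  have hacross : ∀ {x y : α}, transferBlock a S L x < transferBlock a S L y →
      transferKey a S L x < transferKey a S L y := fun h => Prod.Lex.toLex_lt_toLex.2 (Or.inl h)
  have hfilter {p : α → Bool} : ((L.take k).filter p).Sublist L :=
    List.filter_sublist.trans (List.take_sublist _ _)
  simp only [subsetTransfer, List.pairwise_append, List.pairwise_singleton, List.mem_append,
    List.mem_singleton]
  refine ⟨⟨⟨hwithin 0 hfilter hA, trivial, ?_⟩, hwithin 2 hfilter hB, ?_⟩,
    hwithin 3 (List.drop_sublist _ _) hC, ?_⟩
  · rintro x hx _ rfl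
    exact hacross (by rw [hA x hx, ha]; decide)
  · rintro x (hx | rfl) y hy
    · exact hacross (by rw [hA x hx, hB y hy]; decide)
    · exact hacross (by rw [ha, hB y hy]; decide)
  · rintro x ((hx | rfl) | hx) y hy
    · exact hacross (by rw [hA x hx, hC y hy]; decide)
    · exact hacross (by rw [ha, hC y hy]; decide)
    · exact hacross (by rw [hB x hx, hC y hy]; decide)

theorem transferKey_lt_transferKey_iff (hS : ∀ s ∈ S, L.idxOf s < L.idxOf a) {x y : α}
    (hxy : L.idxOf x < L.idxOf y) :
    transferKey a S L y < transferKey a S L x ↔ x ∈ S ∧ y ∉ S ∧ L.idxOf y ≤ L.idxOf a := by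
  simp only [transferKey, Prod.Lex.toLex_lt_toLex, transferBlock]
  have hxS : x ∈ S → L.idxOf x < L.idxOf a := hS x
  have hyS : y ∈ S → L.idxOf y < L.idxOf a := hS y
  split_ifs <;> grind

theorem mem_inversions_subsetTransfer (hnd : L.Nodup) (ha : a ∈ L)
    (hS : ∀ s ∈ S, s ∈ L ∧ L.idxOf s < L.idxOf a) {x y : α} :
    (x, y) ∈ inversions L (subsetTransfer a S L) ↔
      x ∈ S ∧ y ∈ L ∧ y ∉ S ∧ L.idxOf x < L.idxOf y ∧ L.idxOf y ≤ L.idxOf a := by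
  have hp := subsetTransfer_perm (S := S) ha
  have horder {x y : α} (hx : x ∈ L) (hy : y ∈ L) (hxy : L.idxOf x < L.idxOf y) :
      (subsetTransfer a S L).idxOf y < (subsetTransfer a S L).idxOf x ↔
        x ∈ S ∧ y ∉ S ∧ L.idxOf y ≤ L.idxOf a := by
    rw [List.idxOf_lt_idxOf_iff_of_pairwise (pairwise_transferKey_subsetTransfer hnd)
      (hp.mem_iff.2 hy) (hp.mem_iff.2 hx)]
    exact transferKey_lt_transferKey_iff (fun s hs => (hS s hs).2) hxy
  rw [mem_inversions]
  constructor
  · rintro ⟨hx, hy, hxy, hM⟩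
    obtain ⟨hxS, hyS, hya⟩ := (horder hx hy hxy).1 hM
    exact ⟨hxS, hy, hyS, hxy, hya⟩
  · rintro ⟨hxS, hy, hyS, hxy, hya⟩
    have hx := (hS x hxS).1
    exact ⟨hx, hy, hxy, (horder hx hy hxy).2 ⟨hxS, hyS, hya⟩⟩

theorem inversions_subsetTransfer (hnd : L.Nodup) (ha : a ∈ L)
    (hS : ∀ s ∈ S, s ∈ L ∧ L.idxOf s < L.idxOf a) :
    inversions L (subsetTransfer a S L) = (S ×ˢ (L.toFinset \ S)).filter
      (fun p => L.idxOf p.1 < L.idxOf p.2 ∧ L.idxOf p.2 ≤ L.idxOf a) := by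
  ext ⟨x, y⟩
  simp [mem_inversions_subsetTransfer hnd ha hS, and_assoc]

theorem inversions_subsetTransfer_eq_union (hnd : L.Nodup) (ha : a ∈ L)
    (hS : ∀ s ∈ S, s ∈ L ∧ L.idxOf s < L.idxOf a) :
    inversions L (subsetTransfer a S L) = (S ×ˢ (L.toFinset \ insert a S)).filter
        (fun p => L.idxOf p.1 < L.idxOf p.2 ∧ L.idxOf p.2 < L.idxOf a) ∪ S ×ˢ {a} := by
  ext ⟨x, y⟩
  simp only [mem_inversions_subsetTransfer hnd ha hS, mem_union, mem_filter, mem_product,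
    mem_sdiff, mem_insert, mem_singleton, List.mem_toFinset]
  constructor
  · rintro ⟨hxS, hy, hyS, hxy, hya⟩
    rcases hya.lt_or_eq with hya | hya
    · exact Or.inl ⟨⟨hxS, hy, by rintro (rfl | h) <;> [omega; exact hyS h]⟩, hxy, hya⟩
    · exact Or.inr ⟨hxS, (List.idxOf_inj hy).1 hya⟩
  · rintro (⟨⟨hxS, hy, hyaS⟩, hxy, hya⟩ | ⟨hxS, rfl⟩)
    · exact ⟨hxS, hy, fun h => hyaS (Or.inr h), hxy, hya.le⟩
    · exact ⟨hxS, ha, fun h => (hS y h).2.false, (hS x hxS).2, le_rfl⟩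

theorem card_filter_sdiff_idxOf_mem_Ioc (hnd : L.Nodup) (ha : a ∈ L)
    (hS : ∀ s ∈ S, s ∈ L ∧ L.idxOf s < L.idxOf a) (s : α) :
    ((L.toFinset \ S).filter (fun y => L.idxOf s < L.idxOf y ∧ L.idxOf y ≤ L.idxOf a)).card
      = L.idxOf a - L.idxOf s - (S.filter (fun s' => L.idxOf s < L.idxOf s')).card := by
  have hsub : S.filter (fun s' => L.idxOf s < L.idxOf s') ⊆
      L.toFinset.filter (fun y => L.idxOf s < L.idxOf y ∧ L.idxOf y ≤ L.idxOf a) :=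
    fun y hy => by
      obtain ⟨hyS, hsy⟩ := mem_filter.1 hy
      exact mem_filter.2 ⟨List.mem_toFinset.2 (hS y hyS).1, hsy, (hS y hyS).2.le⟩
  have hsplit : (L.toFinset \ S).filter (fun y => L.idxOf s < L.idxOf y ∧ L.idxOf y ≤ L.idxOf a)
      = L.toFinset.filter (fun y => L.idxOf s < L.idxOf y ∧ L.idxOf y ≤ L.idxOf a)
        \ S.filter (fun s' => L.idxOf s < L.idxOf s') := by
    ext y
    simp only [mem_filter, mem_sdiff]
    tauto
  rw [hsplit, card_sdiff_of_subset hsub,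
    card_filter_idxOf_mem_Ioc hnd (List.idxOf_lt_length_iff.2 ha)]

end SubsetTransfer

/-- A subset transfer with respect to an item `a` (at position `k = indexOf a`)
and a set `S` of items preceding `a` uses exactly
`Σ_{s ∈ S} (k − pos(s) − |{s' ∈ S : s' between s and a}|)` adjacent transpositions;
equivalently its cost equals the number of pairs `(s, b)` with `s ∈ S`, `b ∉ S ∪ {a}`
strictly between `s` and `a`, plus `|S|`; and concretely this cost is the number of
inversions between the original list and the resulting list, which is the minimal
number of adjacent transpositions realizing the reorganization. -/
theorem subsetTransfer_cost (L : List α) (a : α) (S : Finset α)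
    (hnd : L.Nodup) (ha : a ∈ L)
    (hS : ∀ s ∈ S, s ∈ L ∧ L.idxOf s < L.idxOf a) :
    invCount L (subsetTransfer a S L)
        = ∑ s ∈ S, (L.idxOf a - L.idxOf s
            - (S.filter (fun s' => L.idxOf s < L.idxOf s')).card)
      ∧ invCount L (subsetTransfer a S L)
        = ((S ×ˢ (L.toFinset \ insert a S)).filter
            (fun p => L.idxOf p.1 < L.idxOf p.2 ∧ L.idxOf p.2 < L.idxOf a)).card
          + S.card
      ∧ IsLeast {n : ℕ | ∃ ops : List ℕ, ops.length = n ∧ applySwaps ops L = subsetTransfer a S L}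
          (invCount L (subsetTransfer a S L)) := by
  refine ⟨?_, ?_, isLeast_invCount hnd (subsetTransfer_perm ha).symm⟩
  · rw [invCount_eq_card_inversions, inversions_subsetTransfer hnd ha hS, card_filter_product]
    exact sum_congr rfl fun s _ => card_filter_sdiff_idxOf_mem_Ioc hnd ha hS s
  · have hdisj : Disjoint ((S ×ˢ (L.toFinset \ insert a S)).filter
        (fun p => L.idxOf p.1 < L.idxOf p.2 ∧ L.idxOf p.2 < L.idxOf a)) (S ×ˢ {a}) :=
      disjoint_left.2 fun _ hE hA => by
        simp only [mem_filter, mem_product, mem_sdiff, mem_insert, mem_singleton] at hE hA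
        exact hE.1.2.2 (Or.inl hA.2)
    rw [invCount_eq_card_inversions, inversions_subsetTransfer_eq_union hnd ha hS,
      card_union_of_disjoint hdisj, card_product, card_singleton, mul_one]
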